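/- arXiv:2502.02477 — 2 statements merged into one kernel-verified Lean document; each statement's English description precedes it below -/
import Mathlib

section
/- Every bipartite graph G(U,W,E) with |U|=|W|=n and |E|=m ≥ n^{2-δ} (for a constant 0 ≤ δ ≤ 1) contains a complete bipartite subgraph (a δ-clique) whose left partition has at least ⌈n^{1-δ}⌉ vertices and whose right partition has k(n,m,δ) = ⌊δ log n / log(2n²/m)⌋ vertices. -/
/-!
Count the pairs `(u, S)` with `S` a `k`-subset of the neighbourhood of `u`; there are
`∑ u, (d u).choose k` of them. As `(d + 1 - k)^k ≤ k! * d.choose k`, the power-mean inequality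
gives `n * (m/2)^k ≤ n^k * k! * ∑ u, (d u).choose k` once `k - 1 ≤ m/(2n)`. The choice of
`k` makes `(2n²/m)^k ≤ n^δ`, which implies both that and
`n^(1-δ) * n.choose k ≤ ∑ u, (d u).choose k`, so by pigeonhole some `k`-set lies in the
neighbourhoods of at least `n^(1-δ)` vertices.
-/

open Finset Real
open scoped Nat

theorem natCast_lt_pow {t : ℝ} (ht : 2 ≤ t) (k : ℕ) : (k : ℝ) < t ^ k :=
  calc (k : ℝ) < 2 ^ k := by exact_mod_cast k.lt_two_pow_self
    _ ≤ t ^ k := by gcongr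

theorem mul_natCast_sub_one_le_pow {t : ℝ} (ht : 2 ≤ t) (k : ℕ) : t * (k - 1) ≤ t ^ k := by
  rcases k with _ | k
  · norm_num; linarith
  · rw [_root_.pow_succ', Nat.cast_succ, add_sub_cancel_right]
    exact mul_le_mul_of_nonneg_left (natCast_lt_pow ht k).le (by positivity)

theorem pow_mul_card_le_sum_choose {ι : Type*} (s : Finset ι) (d : ι → ℕ) (k : ℕ) {a : ℝ}
    (ha : 0 ≤ a) (had : a ≤ ∑ i ∈ s, ((d i : ℝ) + 1 - k)) :
    a ^ k * #s ≤ #s ^ k * k ! * ∑ i ∈ s, ((d i).choose k : ℝ) := by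
  rcases k with _ | k
  · simp
  set f : ι → ℝ := fun i => ((d i + 1 - (k + 1) : ℕ) : ℝ)
  have haf : a ≤ ∑ i ∈ s, f i := had.trans <| sum_le_sum fun i _ => sub_le_iff_le_add.2 <| by
    simp only [f]
    exact_mod_cast (le_tsub_add : d i + 1 ≤ d i + 1 - (k + 1) + (k + 1))
  have hf : ∀ i, f i ^ (k + 1) ≤ (k + 1)! * (d i).choose (k + 1) := fun i =>
    (div_le_iff₀' (by positivity)).1 (Nat.pow_le_choose (k + 1) (d i))
  calc a ^ (k + 1) * #s ≤ (∑ i ∈ s, f i) ^ (k + 1) * #s := by gcongr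
    _ ≤ #s ^ k * (∑ i ∈ s, f i ^ (k + 1)) * #s := by
      gcongr
      exact pow_sum_le_card_mul_sum_pow (fun i _ => Nat.cast_nonneg _) k
    _ ≤ #s ^ k * (∑ i ∈ s, (k + 1)! * ((d i).choose (k + 1) : ℝ)) * #s := by
      gcongr with i; exact hf i
    _ = #s ^ (k + 1) * (k + 1)! * ∑ i ∈ s, ((d i).choose (k + 1) : ℝ) := by
      rw [← mul_sum]; ring

theorem pow_floor_logb_div_logb_le {b t y : ℝ} (hb : 1 < b) (ht : 1 < t) (hy : 1 ≤ y) :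
    t ^ ⌊logb b y / logb b t⌋₊ ≤ y := by
  have hlogt : 0 < logb b t := logb_pos hb ht
  have hk : (⌊logb b y / logb b t⌋₊ : ℝ) * logb b t ≤ logb b y :=
    (le_div_iff₀ hlogt).1 <| Nat.floor_le <| div_nonneg (logb_nonneg hb hy) hlogt.le
  rw [← logb_pow] at hk
  exact (logb_le_logb hb (by positivity) (by positivity)).1 hk

section DoubleCounting

variable {α β : Type*} [Fintype α] [Fintype β] [DecidableEq β]

theorem sum_card_filter_subset_eq_sum_choose (N : α → Finset β) (k : ℕ) :
    ∑ S ∈ powersetCard k univ, #{u | S ⊆ N u} = ∑ u, (#(N u)).choose k := by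
  refine (sum_card_bipartiteAbove_eq_sum_card_bipartiteBelow (s := univ)
    (fun u S => S ⊆ N u)).symm.trans (sum_congr rfl fun u _ => ?_)
  rw [bipartiteAbove, ← card_powersetCard]
  congr 1
  ext S
  simp [mem_powersetCard, and_comm]

theorem exists_card_eq_ceil_le_card_filter_subset (N : α → Finset β) {k : ℕ}
    (hk : k ≤ Fintype.card β) {r : ℝ}
    (h : r * (Fintype.card β).choose k ≤ ∑ u, ((#(N u)).choose k : ℝ)) :
    ∃ S : Finset β, #S = k ∧ ⌈r⌉₊ ≤ #{u | S ⊆ N u} := by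
  have hsum : ∑ _S ∈ powersetCard k (univ : Finset β), r
      ≤ ∑ S ∈ powersetCard k univ, (#{u | S ⊆ N u} : ℝ) := by
    rw [sum_const, card_powersetCard, Finset.card_univ, nsmul_eq_mul, mul_comm]
    have hcount : ∑ u, ((#(N u)).choose k : ℝ)
        = ∑ S ∈ powersetCard k univ, (#{u | S ⊆ N u} : ℝ) := by
      exact_mod_cast (sum_card_filter_subset_eq_sum_choose N k).symm
    exact hcount ▸ h
  obtain ⟨S, hS, hrS⟩ := exists_le_of_sum_le (powersetCard_nonempty.2 (by simpa using hk)) hsum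
  exact ⟨S, (mem_powersetCard.1 hS).2, Nat.ceil_le.2 hrS⟩

end DoubleCounting

namespace KovariSosTuran

variable {α β : Type*} [Fintype α] [Fintype β] (N : α → Finset β) {n m k : ℕ}
  (hα : Fintype.card α = n) (hβ : Fintype.card β = n) (hNm : ∑ u, #(N u) = m)

include hα hβ hNm

theorem sum_card_le_sq : m ≤ n ^ 2 :=
  calc m = ∑ u, #(N u) := hNm.symm
    _ ≤ ∑ _u : α, n := sum_le_sum fun u _ => hβ ▸ card_le_univ (N u)
    _ = n ^ 2 := by simp [hα, sq]

variable (hm : 0 < m)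
include hm

theorem two_le_two_mul_sq_div : (2 : ℝ) ≤ 2 * n ^ 2 / m := by
  rw [le_div_iff₀ (by exact_mod_cast hm)]
  gcongr
  exact_mod_cast sum_card_le_sq N hα hβ hNm

theorem card_pos : 0 < n :=
  Nat.pos_of_ne_zero fun hn => by
    have := sum_card_le_sq N hα hβ hNm
    simp [hn] at this
    omega

variable {y : ℝ} (hy : y ≤ n) (hk : (2 * n ^ 2 / m : ℝ) ^ k ≤ y)
include hy hk

theorem le_card : k ≤ n := by
  have := (natCast_lt_pow (two_le_two_mul_sq_div N hα hβ hNm hm) k).trans_le (hk.trans hy)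
  exact_mod_cast this.le

theorem mul_sub_one_le_half : n * ((k : ℝ) - 1) ≤ m / 2 := by
  have hn := (card_pos N hα hβ hNm hm).ne'
  have h := (mul_natCast_sub_one_le_pow (two_le_two_mul_sq_div N hα hβ hNm hm) k).trans
    (hk.trans hy)
  calc (n : ℝ) * (k - 1) = m / (2 * n) * (2 * n ^ 2 / m * (k - 1)) := by
        field_simp
    _ ≤ m / (2 * n) * n := by gcongr
    _ = m / 2 := by field_simp

theorem div_mul_choose_le_sum_choose :
    n / y * n.choose k ≤ ∑ u, ((#(N u)).choose k : ℝ) := by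
  have hn : (0 : ℝ) < n := by exact_mod_cast card_pos N hα hβ hNm hm
  have hm0 : (0 : ℝ) < m := by exact_mod_cast hm
  have hy0 : 0 < y := lt_of_lt_of_le (by positivity) hk
  have hdeg : (m : ℝ) / 2 ≤ ∑ u, ((#(N u) : ℝ) + 1 - k) := by
    have := mul_sub_one_le_half N hα hβ hNm hm hy hk
    rw [sum_sub_distrib, sum_add_distrib]
    simp only [sum_const, card_univ, hα, nsmul_eq_mul, mul_one]
    rw [← Nat.cast_sum, hNm]
    linarith
  have hconv := pow_mul_card_le_sum_choose univ (fun u => #(N u)) k (by positivity) hdeg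
  rw [card_univ, hα] at hconv
  have hchoose : (n.choose k : ℝ) * k ! ≤ n ^ k :=
    (le_div_iff₀ (by positivity)).1 (Nat.choose_le_pow_div k n)
  refine le_of_mul_le_mul_right ?_ (by positivity : (0 : ℝ) < n ^ k * k !)
  calc n / y * n.choose k * (n ^ k * k !) = n / y * ((n.choose k : ℝ) * k !) * n ^ k := by ring
    _ ≤ n / y * n ^ k * n ^ k := by gcongr
    _ = n / y * (2 * n ^ 2 / m) ^ k * (m / 2) ^ k := by
      rw [mul_assoc, mul_assoc, ← mul_pow, ← mul_pow]
      field_simp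
    _ ≤ n / y * y * (m / 2) ^ k := by gcongr
    _ = (m / 2) ^ k * n := by field_simp
    _ ≤ _ := hconv.trans_eq (by ring)

variable [DecidableEq β]

theorem exists_card_eq_ceil_div_le_card_filter_subset :
    ∃ S : Finset β, #S = k ∧ ⌈n / y⌉₊ ≤ #{u | S ⊆ N u} :=
  exists_card_eq_ceil_le_card_filter_subset N (hβ ▸ le_card N hα hβ hNm hm hy hk)
    (hβ ▸ div_mul_choose_le_sum_choose N hα hβ hNm hm hy hk)

end KovariSosTuran

theorem sum_card_filter_prodMk_mem {α β : Type*} [Fintype α] [Fintype β] [DecidableEq α]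
    [DecidableEq β] (E : Finset (α × β)) : ∑ u, #{w | (u, w) ∈ E} = #E := by
  simp only [card_filter]
  rw [← Fintype.sum_prod_type' (fun u w => if (u, w) ∈ E then 1 else 0), ← card_filter]
  simp

theorem stmt_0_general (n : ℕ) (hn : 2 ≤ n) (E : Finset (Fin n × Fin n)) (δ : ℝ)
    (hδ0 : 0 ≤ δ) (hδ1 : δ ≤ 1) (m : ℕ) (hm : m = E.card)
    (hm0 : 0 < m)
    (hratio : 1 < 2 * (n : ℝ) ^ 2 / m) :
    ∃ U' W' : Finset (Fin n),
      (∀ u ∈ U', ∀ w ∈ W', (u, w) ∈ E) ∧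
      ⌈(n : ℝ) ^ ((1 : ℝ) - δ)⌉₊ ≤ U'.card ∧
      W'.card = ⌊δ * Real.logb 2 n / Real.logb 2 (2 * (n : ℝ) ^ 2 / m)⌋₊ := by
  have hn1 : (1 : ℝ) ≤ n := by exact_mod_cast one_le_two.trans hn
  have hk : (2 * (n : ℝ) ^ 2 / m) ^ ⌊δ * logb 2 n / logb 2 (2 * (n : ℝ) ^ 2 / m)⌋₊
      ≤ (n : ℝ) ^ δ := by
    rw [← logb_rpow_eq_mul_logb_of_pos (by positivity)]
    exact pow_floor_logb_div_logb_le one_lt_two hratio (one_le_rpow hn1 hδ0)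
  obtain ⟨S, hS, hU⟩ := KovariSosTuran.exists_card_eq_ceil_div_le_card_filter_subset
    (fun u => {w | (u, w) ∈ E}) (Fintype.card_fin n) (Fintype.card_fin n)
    ((sum_card_filter_prodMk_mem E).trans hm.symm) hm0 (rpow_le_self_of_one_le hn1 hδ1) hk
  rw [rpow_sub (by positivity), rpow_one]
  refine ⟨_, S, fun u hu w hw => ?_, hU, hS⟩
  simpa using (mem_filter.1 hu).2 hw

/-- Every bipartite graph with `n` vertices on each side and `m ≥ n^(2-δ)` edges
contains a δ-clique: a complete bipartite subgraph with left partition of size at least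
`⌈n^(1-δ)⌉` and right partition of size exactly `⌊δ log n / log (2n²/m)⌋` (logs base 2). -/
theorem stmt_0 (n : ℕ) (hn : 2 ≤ n) (E : Finset (Fin n × Fin n)) (δ : ℝ)
    (hδ0 : 0 ≤ δ) (hδ1 : δ ≤ 1) (m : ℕ) (hm : m = E.card)
    (hm0 : 0 < m)
    (hratio : 1 < 2 * (n : ℝ) ^ 2 / m)
    (hmlb : (n : ℝ) ^ ((2 : ℝ) - δ) ≤ m) :
    ∃ U' W' : Finset (Fin n),
      (∀ u ∈ U', ∀ w ∈ W', (u, w) ∈ E) ∧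
      ⌈(n : ℝ) ^ ((1 : ℝ) - δ)⌉₊ ≤ U'.card ∧
      W'.card = ⌊δ * Real.logb 2 n / Real.logb 2 (2 * (n : ℝ) ^ 2 / m)⌋₊ :=
  stmt_0_general n hn E δ hδ0 hδ1 m hm hm0 hratio
end

section
/- If a compression procedure on a bipartite graph processes edges in stages, where stage i removes at most 2m/2^i edges and for each removed edge adds at most (1/k_i + 1/n^{1−δ}) new edges with 1/(2k_i) ≤ 1/k + i/(δ log n), then the total number of edges added is O(m/k + m/log n + m/n^{1−δ}). -/
/-!
Stage `i` removes at most `2m/2^i` edges and, since `1/k_i ≤ 2/k + 2i/(δ log n)`, adds at most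
`((2/k + 1/n^(1-δ)) + 2i/(δ log n)) · 2m/2^i` of them. Summing over the stages, the geometric
series `∑ 2^-i` and the arithmetico-geometric series `∑ i 2^-i` both converge, giving
`4m/k + 2m/n^(1-δ) + 8m/(δ log n)`.
-/

open Real

theorem hasSum_affine_mul_geometric {r : ℝ} (h0 : 0 ≤ r) (h1 : r < 1) (c d : ℝ) :
    HasSum (fun n : ℕ => (c + d * (n + 1)) * r ^ n) (c / (1 - r) + d / (1 - r) ^ 2) := by
  have hr : ‖r‖ < 1 := by rwa [norm_of_nonneg h0]
  have hgeom := hasSum_geometric_of_lt_one h0 h1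
  have hcoe := hasSum_coe_mul_geometric_of_norm_lt_one hr
  have hterm : (fun n : ℕ => (c + d * (n + 1)) * r ^ n)
      = fun n : ℕ => c * r ^ n + d * (n * r ^ n + r ^ n) := by
    funext n
    ring
  have hval : c / (1 - r) + d / (1 - r) ^ 2
      = c * (1 - r)⁻¹ + d * (r / (1 - r) ^ 2 + (1 - r)⁻¹) := by
    have : 1 - r ≠ 0 := by linarith
    field_simp
    ring
  rw [hterm, hval]
  exact (hgeom.mul_left c).add ((hcoe.add hgeom).mul_left d)

theorem tsum_le_of_le_affine_mul_geometric {a : ℕ → ℝ} {r c d : ℝ} (h0 : 0 ≤ r) (h1 : r < 1)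
    (ha0 : ∀ n, 0 ≤ a n) (ha : ∀ n, a n ≤ (c + d * (n + 1)) * r ^ n) :
    ∑' n, a n ≤ c / (1 - r) + d / (1 - r) ^ 2 := by
  have hsum := hasSum_affine_mul_geometric h0 h1 c d
  exact hasSum_le ha (Summable.of_nonneg_of_le ha0 ha hsum.summable).hasSum hsum

theorem stage_le_affine_mul_half_pow {m K L N δ k a : ℝ} {i : ℕ} (hm : 0 ≤ m)
    (hk : 1 / (2 * k) ≤ 1 / K + ((i + 1 : ℕ) : ℝ) / (δ * L))
    (ha : a ≤ (1 / k + 1 / N) * (2 * m / 2 ^ (i + 1))) :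
    a ≤ ((2 / K + 1 / N) * m + 2 * m / (δ * L) * (i + 1)) * (1 / 2) ^ i := by
  have hinv : 1 / k ≤ 2 / K + 2 * (i + 1) / (δ * L) := by
    rw [show 1 / (2 * k) = 1 / k / 2 by ring, div_le_iff₀ two_pos] at hk
    push_cast at hk
    exact hk.trans_eq (by ring)
  have hstage : 2 * m / 2 ^ (i + 1) = m * (1 / 2) ^ i := by
    rw [pow_succ, one_div_pow]
    field_simp
  calc a ≤ (1 / k + 1 / N) * (m * (1 / 2) ^ i) := hstage ▸ ha
    _ ≤ (2 / K + 2 * (i + 1) / (δ * L) + 1 / N) * (m * (1 / 2) ^ i) := by gcongr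
    _ = ((2 / K + 1 / N) * m + 2 * m / (δ * L) * (i + 1)) * (1 / 2) ^ i := by ring

theorem stmt_9_general (δ : ℝ) (hδ0 : 0 < δ) :
    ∃ C : ℝ, 0 < C ∧ ∀ (n : ℕ), 2 ≤ n → ∀ m : ℝ,
      2 * (n : ℝ) ^ ((2 : ℝ) - δ / 2) < m → m ≤ (n : ℝ) ^ 2 →
      ∀ K : ℝ, K = (⌊δ * Real.logb 2 n / Real.logb 2 (2 * (n : ℝ) ^ 2 / m)⌋₊ : ℝ) →
      0 < K →
      ∀ ki : ℕ → ℝ, (∀ i, 1 ≤ i → 0 < ki i) →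
        (∀ i, 1 ≤ i → 1 / (2 * ki i) ≤ 1 / K + (i : ℝ) / (δ * Real.logb 2 n)) →
      ∀ added : ℕ → ℝ, (∀ i, 1 ≤ i → 0 ≤ added i) →
        (∀ i, 1 ≤ i →
          added i ≤ (1 / ki i + 1 / (n : ℝ) ^ ((1 : ℝ) - δ)) * (2 * m / 2 ^ i)) →
      ∑' i : ℕ, added (i + 1) ≤
        C * (m / K + m / Real.logb 2 n + m / (n : ℝ) ^ ((1 : ℝ) - δ)) := by
  refine ⟨4 + 8 / δ, by positivity, ?_⟩
  intro n hn m hm _ K _ hK ki _ hki added hadd0 hadd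
  set L := logb 2 n
  set N := (n : ℝ) ^ ((1 : ℝ) - δ)
  have hL : 0 < L := logb_pos one_lt_two (by exact_mod_cast hn)
  have hN : 0 < N := by positivity
  have hm0 : 0 < m := lt_trans (by positivity) hm
  have hsum := tsum_le_of_le_affine_mul_geometric (by norm_num) (by norm_num)
    (fun i => hadd0 (i + 1) i.succ_pos)
    (fun i => stage_le_affine_mul_half_pow hm0.le (hki (i + 1) i.succ_pos)
      (hadd (i + 1) i.succ_pos))
  have hmK : 0 ≤ m / K := by positivity
  have hmL : 0 ≤ m / L := by positivity
  have hmN : 0 ≤ m / N := by positivity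
  calc ∑' i, added (i + 1)
      ≤ (2 / K + 1 / N) * m / (1 - 1 / 2) + 2 * m / (δ * L) / (1 - 1 / 2) ^ 2 := hsum
    _ = 4 * (m / K) + 2 * (m / N) + 8 / δ * (m / L) := by field_simp; ring
    _ ≤ (4 + 8 / δ) * (m / K + m / L + m / N) := by
      have : 0 ≤ 8 / δ := by positivity
      nlinarith

/-- If a compression procedure processes edges in stages, where stage `i ≥ 1` adds
`added i` edges with `added i ≤ (1/k_i + 1/n^(1-δ)) · (2m/2^i)` (stage `i` removes at
most `2m/2^i` edges, each removed edge adding at most `1/k_i + 1/n^(1-δ)` new edges),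
and `1/(2 k_i) ≤ 1/k + i/(δ log n)` with `k = ⌊δ log n / log (2n²/m)⌋ > 0`, then the
total number of added edges is `O(m/k + m/log n + m/n^(1-δ))`. -/
theorem stmt_9 (δ : ℝ) (hδ0 : 0 < δ) (hδ1 : δ < 1) :
    ∃ C : ℝ, 0 < C ∧ ∀ (n : ℕ), 2 ≤ n → ∀ m : ℝ,
      2 * (n : ℝ) ^ ((2 : ℝ) - δ / 2) < m → m ≤ (n : ℝ) ^ 2 →
      ∀ K : ℝ, K = (⌊δ * Real.logb 2 n / Real.logb 2 (2 * (n : ℝ) ^ 2 / m)⌋₊ : ℝ) →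
      0 < K →
      ∀ ki : ℕ → ℝ, (∀ i, 1 ≤ i → 0 < ki i) →
        (∀ i, 1 ≤ i → 1 / (2 * ki i) ≤ 1 / K + (i : ℝ) / (δ * Real.logb 2 n)) →
      ∀ added : ℕ → ℝ, (∀ i, 1 ≤ i → 0 ≤ added i) →
        (∀ i, 1 ≤ i →
          added i ≤ (1 / ki i + 1 / (n : ℝ) ^ ((1 : ℝ) - δ)) * (2 * m / 2 ^ i)) →
      ∑' i : ℕ, added (i + 1) ≤
        C * (m / K + m / Real.logb 2 n + m / (n : ℝ) ^ ((1 : ℝ) - δ)) :=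
  stmt_9_general δ hδ0
end
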